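/- Let w : ℝ^n → (0,∞] be lower semicontinuous, Ω ⊆ ℝ^n open, and 0 < δ < 1. Then BV(Ω;w) ⊆ BV_loc(Ω;w^δ); that is, every function of bounded w-variation in Ω has locally bounded w^δ-variation in Ω. -/

import Mathlib

open MeasureTheory Metric ENNReal Filter
open scoped Topology RealInnerProductSpace ENNReal NNReal

noncomputable section

/-- Euclidean space `ℝ^n`. -/
abbrev Euc (n : ℕ) : Type := EuclideanSpace ℝ (Fin n)

/-- The divergence of a vector field `φ : ℝ^n → ℝ^n`, defined via `fderiv`
(which, by Rademacher's theorem, is defined a.e. when `φ` is Lipschitz). -/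
def divg {n : ℕ} (φ : Euc n → Euc n) (x : Euc n) : ℝ :=
  ∑ i, fderiv ℝ φ x (EuclideanSpace.single i 1) i

/-- `φ ∈ Lip_c(U; ℝ^n)`: compactly supported Lipschitz vector fields with support in `U`. -/
def IsLipc {n : ℕ} (U : Set (Euc n)) (φ : Euc n → Euc n) : Prop :=
  (∃ K, LipschitzWith K φ) ∧ HasCompactSupport φ ∧ tsupport φ ⊆ U

/-- The weighted variation `‖Df‖_w(U) = sup {∫_U f div φ : φ ∈ Lip_c(U;ℝ^n), |φ| ≤ w}`. -/
def wVar {n : ℕ} (U : Set (Euc n)) (w : Euc n → ℝ≥0∞) (f : Euc n → ℝ) : ℝ≥0∞ :=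
  ⨆ (φ : Euc n → Euc n) (_ : IsLipc U φ ∧ ∀ x, (‖φ x‖₊ : ℝ≥0∞) ≤ w x),
    ENNReal.ofReal (∫ x in U, f x * divg φ x)

/-- `f ∈ L¹(Ω; w)`. -/
def MemL1w {n : ℕ} (Ω : Set (Euc n)) (w : Euc n → ℝ≥0∞) (f : Euc n → ℝ) : Prop :=
  AEStronglyMeasurable f (volume.restrict Ω) ∧ (∫⁻ x in Ω, ‖f x‖₊ * w x) < ⊤

/-- `f ∈ BV(Ω; w)`: bounded `w`-variation.  (Unweighted `BV(Ω)` is the case `w ≡ 1`.) -/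
def MemBVw {n : ℕ} (Ω : Set (Euc n)) (w : Euc n → ℝ≥0∞) (f : Euc n → ℝ) : Prop :=
  MemL1w Ω w f ∧ wVar Ω w f < ⊤

/-- `V ⋐ Ω`: `V` is open and compactly contained in `Ω`. -/
def CpctIn {n : ℕ} (V Ω : Set (Euc n)) : Prop :=
  IsOpen V ∧ IsCompact (closure V) ∧ closure V ⊆ Ω

/-- `f ∈ L¹_loc(Ω; w)`. -/
def MemL1wLoc {n : ℕ} (Ω : Set (Euc n)) (w : Euc n → ℝ≥0∞) (f : Euc n → ℝ) : Prop :=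
  AEStronglyMeasurable f (volume.restrict Ω) ∧
    ∀ K : Set (Euc n), IsCompact K → K ⊆ Ω → (∫⁻ x in K, ‖f x‖₊ * w x) < ⊤

/-- `f ∈ BV_loc(Ω; w)`: locally bounded `w`-variation. -/
def MemBVwLoc {n : ℕ} (Ω : Set (Euc n)) (w : Euc n → ℝ≥0∞) (f : Euc n → ℝ) : Prop :=
  MemL1wLoc Ω w f ∧ ∀ V : Set (Euc n), CpctIn V Ω → wVar V w f < ⊤

/-- `μ` is the variation (Radon) measure `‖Df‖` of `f` on `Ω`: it is carried by `Ω`,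
finite on compact subsets of `Ω`, and `μ(V) = ‖Df‖(V)` for all open `V ⋐ Ω`. -/
def IsVarMeasure {n : ℕ} (Ω : Set (Euc n)) (f : Euc n → ℝ) (μ : Measure (Euc n)) : Prop :=
  μ Ωᶜ = 0 ∧ (∀ K : Set (Euc n), IsCompact K → K ⊆ Ω → μ K < ⊤) ∧
    ∀ V : Set (Euc n), CpctIn V Ω → μ V = wVar V (fun _ => 1) f

/-- `w` is an everywhere `A₁` weight with constant `C`:
`w` is locally integrable and `⨍_B w ≤ C · inf_B w` for every ball `B`. -/
def IsEA1 {n : ℕ} (w : Euc n → ℝ≥0∞) (C : ℝ≥0∞) : Prop :=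
  Measurable w ∧
  (∀ (x : Euc n) (r : ℝ), 0 < r → (∫⁻ y in ball x r, w y) < ⊤) ∧
  ∀ (x : Euc n) (r : ℝ), 0 < r →
    (∫⁻ y in ball x r, w y) / volume (ball x r) ≤ C * ⨅ y ∈ ball x r, w y

/-- `|a - b|` for extended nonnegative reals. -/
def eabs (a b : ℝ≥0∞) : ℝ≥0∞ := (a - b) ⊔ (b - a)

/-- `x` is a Lebesgue point of the weight `v`. -/
def IsLebPt {n : ℕ} (v : Euc n → ℝ≥0∞) (x : Euc n) : Prop :=
  Tendsto (fun r : ℝ => (∫⁻ y in ball x r, eabs (v y) (v x)) / volume (ball x r))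
    (𝓝[>] (0 : ℝ)) (𝓝 0)

/-- `f` is `v`-approximable: `‖Df‖`-a.e. point is a Lebesgue point of `v`. -/
def Approximable {n : ℕ} (Ω : Set (Euc n)) (f : Euc n → ℝ) (v : Euc n → ℝ≥0∞) : Prop :=
  ∀ μ : Measure (Euc n), IsVarMeasure Ω f μ → ∀ᵐ x ∂μ, IsLebPt v x

/-- `g` is the weak gradient of `f` on `Ω`. -/
def HasWeakGradient {n : ℕ} (Ω : Set (Euc n)) (f : Euc n → ℝ) (g : Euc n → Euc n) : Prop :=
  AEStronglyMeasurable g (volume.restrict Ω) ∧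
  ∀ φ : Euc n → Euc n, IsLipc Ω φ →
    ∫ x in Ω, f x * divg φ x = -∫ x in Ω, ⟪g x, φ x⟫

/-- `f ∈ W^{1,1}(Ω; w)`. -/
def MemW11w {n : ℕ} (Ω : Set (Euc n)) (w : Euc n → ℝ≥0∞) (f : Euc n → ℝ) : Prop :=
  MemL1w Ω w f ∧
    ∃ g : Euc n → Euc n, HasWeakGradient Ω f g ∧ (∫⁻ x in Ω, ‖g x‖₊ * w x) < ⊤

/-- First `n` coordinates of a point of `ℝ^{n+1}`. -/
def projE {n : ℕ} (z : Euc (n + 1)) : Euc n := WithLp.toLp 2 (fun i => z i.castSucc)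

/-- Last coordinate of a point of `ℝ^{n+1}`. -/
def lastE {n : ℕ} (z : Euc (n + 1)) : ℝ := z (Fin.last n)

/-- The subgraph `A_w = {(x, y) : x ∈ A, 0 < y < w x} ⊆ ℝ^{n+1}`. -/
def subgraph {n : ℕ} (A : Set (Euc n)) (w : Euc n → ℝ≥0∞) : Set (Euc (n + 1)) :=
  {z | projE z ∈ A ∧ 0 < lastE z ∧ ENNReal.ofReal (lastE z) < w (projE z)}

/-- The uncentered Hardy–Littlewood maximal function of a measure. -/
def maxFn {N : ℕ} (μ : Measure (Euc N)) (x : Euc N) : ℝ≥0∞ :=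
  ⨆ (z : Euc N) (r : ℝ) (_ : 0 < r) (_ : x ∈ ball z r),
    μ (ball z r) / volume (ball z r)

end

section Aux

/-- A positive lower semicontinuous function has a positive lower bound on a compact set. -/
lemma my_lb {n : ℕ} (K : Set (Euc n)) (hK : IsCompact K)
    (w : Euc n → ℝ≥0∞) (hw0 : ∀ x, 0 < w x) (hlsc : LowerSemicontinuous w) :
    ∃ c : ℝ≥0∞, 0 < c ∧ c ≤ 1 ∧ c ≠ ⊤ ∧ ∀ x ∈ K, c ≤ w x := by
  have hcov : K ⊆ ⋃ m : ℕ, w ⁻¹' Set.Ioi ((m : ℝ≥0∞))⁻¹ := by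
    intro x _
    obtain ⟨m, hm⟩ := ENNReal.exists_inv_nat_lt (hw0 x).ne'
    exact Set.mem_iUnion.2 ⟨m, hm⟩
  obtain ⟨t, ht⟩ := hK.elim_finite_subcover _
    (fun m : ℕ => hlsc.isOpen_preimage ((m : ℝ≥0∞))⁻¹) hcov
  refine ⟨((t.sup id : ℕ) : ℝ≥0∞)⁻¹ ⊓ 1, ?_, inf_le_right, ?_, ?_⟩
  · refine lt_min ?_ zero_lt_one
    simp [ENNReal.inv_pos]
  · exact ne_top_of_le_ne_top one_ne_top inf_le_right
  · intro x hx
    obtain ⟨i, hit, hxi⟩ := Set.mem_iUnion₂.1 (ht hx)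
    have h1 : ((t.sup id : ℕ) : ℝ≥0∞)⁻¹ ≤ ((i : ℕ) : ℝ≥0∞)⁻¹ := by
      apply ENNReal.inv_le_inv.2
      exact_mod_cast Finset.le_sup (f := id) hit
    exact le_trans (le_trans inf_le_left h1) (le_of_lt hxi)

/-- The key pointwise inequality `a^δ ≤ c^(δ-1) a` for `0 < c ≤ 1`, `c ≤ a`. -/
lemma my_rpow_le {δ : ℝ} (hδ0 : 0 < δ) (hδ1 : δ < 1) {c a : ℝ≥0∞}
    (hc0 : c ≠ 0) (hc1 : c ≤ 1) (hca : c ≤ a) : a ^ δ ≤ c ^ (δ - 1) * a := by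
  have hinv : ∀ b : ℝ≥0∞, b ^ (δ - 1) = (b ^ (1 - δ))⁻¹ := by
    intro b
    rw [show δ - 1 = -(1 - δ) by ring, ENNReal.rpow_neg]
  have hC1 : (1 : ℝ≥0∞) ≤ c ^ (δ - 1) := by
    rw [hinv]
    rw [ENNReal.one_le_inv]
    calc c ^ (1 - δ) ≤ 1 ^ (1 - δ) := ENNReal.rpow_le_rpow hc1 (by linarith)
      _ = 1 := ENNReal.one_rpow _
  rcases eq_or_ne a ⊤ with rfl | haT
  · rw [ENNReal.top_rpow_of_pos hδ0]
    calc (⊤ : ℝ≥0∞) = 1 * ⊤ := (one_mul _).symm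
      _ ≤ c ^ (δ - 1) * ⊤ := by gcongr
  · have ha0 : a ≠ 0 := fun h => hc0 (le_antisymm (h ▸ hca) zero_le)
    have key := ENNReal.rpow_add (x := a) (δ - 1) 1 ha0 haT
    rw [ENNReal.rpow_one, show δ - 1 + 1 = δ by ring] at key
    rw [key]
    refine mul_le_mul_left ?_ a
    rw [hinv, hinv]
    apply ENNReal.inv_le_inv.2
    exact ENNReal.rpow_le_rpow hca (by linarith)

lemma my_divg_zero {n : ℕ} (φ : Euc n → Euc n) (x : Euc n) (hx : x ∉ tsupport φ) :
    divg φ x = 0 := by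
  have hφ : φ =ᶠ[𝓝 x] (fun _ => (0 : Euc n)) := by
    filter_upwards [(isClosed_tsupport φ).isOpen_compl.mem_nhds hx] with y hy
    exact image_eq_zero_of_notMem_tsupport hy
  have h0 : fderiv ℝ φ x = fderiv ℝ (fun _ => (0 : Euc n)) x := hφ.fderiv_eq
  simp [divg, h0]

lemma my_divg_smul {n : ℕ} (M : ℝ) (hM : M ≠ 0) (φ : Euc n → Euc n) (x : Euc n) :
    divg (fun y => M⁻¹ • φ y) x = M⁻¹ * divg φ x := by
  by_cases h : DifferentiableAt ℝ φ x
  · have hd : fderiv ℝ (fun y => M⁻¹ • φ y) x = M⁻¹ • fderiv ℝ φ x :=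
      fderiv_const_smul h M⁻¹
    simp only [divg, hd, ContinuousLinearMap.smul_apply]
    rw [Finset.mul_sum]
    exact Finset.sum_congr rfl fun i _ => by simp [PiLp.smul_apply, smul_eq_mul]
  · have h2 : ¬ DifferentiableAt ℝ (fun y => M⁻¹ • φ y) x := by
      intro h2
      have h3 : DifferentiableAt ℝ (fun y => M • (M⁻¹ • φ y)) x := h2.const_smul M
      simp only [smul_smul, mul_inv_cancel₀ hM, one_smul] at h3
      exact h h3
    simp [divg, fderiv_zero_of_not_differentiableAt h, fderiv_zero_of_not_differentiableAt h2]

end Aux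

/-- For lower semicontinuous `w : ℝ^n → (0,∞]` and `0 < δ < 1`,
`BV(Ω;w) ⊆ BV_loc(Ω;w^δ)`. -/
theorem stmt_14 {n : ℕ} (Ω : Set (Euc n)) (hΩ : IsOpen Ω)
    (w : Euc n → ℝ≥0∞) (hw0 : ∀ x, 0 < w x) (hlsc : LowerSemicontinuous w)
    (δ : ℝ) (hδ0 : 0 < δ) (hδ1 : δ < 1)
    (f : Euc n → ℝ) (hf : MemBVw Ω w f) :
    MemBVwLoc Ω (fun x => w x ^ δ) f := by
  obtain ⟨⟨hmeas, hint⟩, hvar⟩ := hf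
  constructor
  · refine ⟨hmeas, fun K hKc hKΩ => ?_⟩
    obtain ⟨c, hc0, hc1, hcT, hcw⟩ := my_lb K hKc w hw0 hlsc
    have hCT : c ^ (δ - 1) ≠ ⊤ := by
      rw [show δ - 1 = -(1 - δ) by ring, ENNReal.rpow_neg, ne_eq, ENNReal.inv_eq_top]
      exact fun h => hc0.ne' ((ENNReal.rpow_eq_zero_iff.1 h).elim
        (fun h => h.1) (fun h => absurd h.2 (by linarith)))
    have hptwise : ∀ᵐ x ∂(volume.restrict K),
        (‖f x‖₊ : ℝ≥0∞) * w x ^ δ ≤ c ^ (δ - 1) * ((‖f x‖₊ : ℝ≥0∞) * w x) := by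
      filter_upwards [ae_restrict_mem hKc.measurableSet] with x hx
      calc (‖f x‖₊ : ℝ≥0∞) * w x ^ δ
          ≤ (‖f x‖₊ : ℝ≥0∞) * (c ^ (δ - 1) * w x) := by
            gcongr
            exact my_rpow_le hδ0 hδ1 hc0.ne' hc1 (hcw x hx)
        _ = c ^ (δ - 1) * ((‖f x‖₊ : ℝ≥0∞) * w x) := by ring
    calc (∫⁻ x in K, ‖f x‖₊ * w x ^ δ)
        ≤ ∫⁻ x in K, c ^ (δ - 1) * ((‖f x‖₊ : ℝ≥0∞) * w x) := lintegral_mono_ae hptwise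
      _ = c ^ (δ - 1) * ∫⁻ x in K, (‖f x‖₊ : ℝ≥0∞) * w x :=
          lintegral_const_mul' _ _ hCT
      _ ≤ c ^ (δ - 1) * ∫⁻ x in Ω, (‖f x‖₊ : ℝ≥0∞) * w x := by
          gcongr
      _ < ⊤ := ENNReal.mul_lt_top hCT.lt_top hint
  · rintro V ⟨hVo, hVc, hVΩ⟩
    obtain ⟨c, hc0, hc1, hcT, hcw⟩ := my_lb _ hVc w hw0 hlsc
    set C := c ^ (δ - 1) with hCdef
    have hC0 : C ≠ 0 := by
      rw [hCdef, ne_eq, ENNReal.rpow_eq_zero_iff]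
      push_neg
      exact ⟨fun h => absurd h hc0.ne', fun h => absurd (h ▸ hc1) (by simp)⟩
    have hCT : C ≠ ⊤ := by
      rw [hCdef, show δ - 1 = -(1 - δ) by ring, ENNReal.rpow_neg, ne_eq, ENNReal.inv_eq_top]
      exact fun h => hc0.ne' ((ENNReal.rpow_eq_zero_iff.1 h).elim
        (fun h => h.1) (fun h => absurd h.2 (by linarith)))
    set M := C.toReal with hMdef
    have hM0 : 0 < M := ENNReal.toReal_pos hC0 hCT
    have hMcoe : (‖M‖₊ : ℝ≥0∞) = C := by
      rw [← enorm_eq_nnnorm, Real.enorm_eq_ofReal hM0.le, hMdef, ENNReal.ofReal_toReal hCT]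
    refine lt_of_le_of_lt (iSup₂_le fun φ hφ => ?_) (ENNReal.mul_lt_top hCT.lt_top hvar)
    obtain ⟨⟨⟨Kφ, hlip⟩, hsupp, hsub⟩, hbound⟩ := hφ
    set ψ := fun y => M⁻¹ • φ y with hψdef
    have hsupψ : Function.support ψ ⊆ Function.support φ := fun x hx => by
      simp only [hψdef, Function.mem_support] at hx ⊢
      intro h; exact hx (by simp [h])
    have htsupψ : tsupport ψ ⊆ tsupport φ := closure_mono hsupψ
    have hsubΩ : tsupport φ ⊆ Ω := hsub.trans (subset_closure.trans hVΩ)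
    have hψlipc : IsLipc Ω ψ :=
      ⟨⟨_, (lipschitzWith_smul (M⁻¹ : ℝ)).comp hlip⟩, hsupp.mono hsupψ, htsupψ.trans hsubΩ⟩
    have hψb : ∀ x, (‖ψ x‖₊ : ℝ≥0∞) ≤ w x := by
      intro x
      by_cases hx : x ∈ tsupport φ
      · have hcx : c ≤ w x := hcw x (subset_closure (hsub hx))
        calc (‖ψ x‖₊ : ℝ≥0∞) = C⁻¹ * (‖φ x‖₊ : ℝ≥0∞) := by
              rw [hψdef]
              simp only [nnnorm_smul, ENNReal.coe_mul]
              rw [nnnorm_inv, ENNReal.coe_inv (by simp [hM0.ne']), hMcoe]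
          _ ≤ C⁻¹ * (C * w x) := by
              gcongr
              exact (hbound x).trans (my_rpow_le hδ0 hδ1 hc0.ne' hc1 hcx)
          _ = w x := by rw [← mul_assoc, ENNReal.inv_mul_cancel hC0 hCT, one_mul]
      · have hx0 : ψ x = 0 := by
          simp [hψdef, image_eq_zero_of_notMem_tsupport hx]
        simp [hx0]
    have hdiv : ∀ y, divg φ y = M * divg ψ y := by
      intro y
      rw [hψdef, my_divg_smul M hM0.ne' φ y, ← mul_assoc, mul_inv_cancel₀ hM0.ne', one_mul]
    have hint1 : ∫ x in V, f x * divg φ x = ∫ x in Ω, f x * divg φ x := by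
      rw [setIntegral_eq_integral_of_forall_compl_eq_zero (fun x hx => by
            rw [my_divg_zero φ x (fun h => hx (hsub h)), mul_zero]),
          setIntegral_eq_integral_of_forall_compl_eq_zero (fun x hx => by
            rw [my_divg_zero φ x (fun h => hx (hsubΩ h)), mul_zero])]
    calc ENNReal.ofReal (∫ x in V, f x * divg φ x)
        = ENNReal.ofReal (M * ∫ x in Ω, f x * divg ψ x) := by
          rw [hint1, ← integral_const_mul]
          congr 1
          refine integral_congr_ae (Filter.Eventually.of_forall fun x => ?_)
          show f x * divg φ x = M * (f x * divg ψ x)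
          rw [hdiv x]; ring
      _ = C * ENNReal.ofReal (∫ x in Ω, f x * divg ψ x) := by
          rw [ENNReal.ofReal_mul hM0.le, hMdef, ENNReal.ofReal_toReal hCT]
      _ ≤ C * wVar Ω w f := by
          gcongr
          exact le_iSup₂_of_le ψ ⟨hψlipc, hψb⟩ le_rfl
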